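/- Let A ∈ ℂ^{n×n} be a Hermitian positive semidefinite matrix of rank k. Then there exists a unique matrix R ∈ ℂ^{k×n} in row echelon form with positive pivots such that A = R^* R. -/

import Mathlib

open Matrix
open scoped ComplexOrder

noncomputable section

/-- A matrix `R ∈ ℂ^{k×n}` is in row echelon form with positive pivots: there is a
strictly increasing pivot map `p` such that `R i (p i)` is real and positive and
`R i j = 0` for `j < p i`. -/
def RowEchelonPosPivots {k n : ℕ} (R : Matrix (Fin k) (Fin n) ℂ) : Prop :=
  ∃ p : Fin k → Fin n, StrictMono p ∧
    ∀ i : Fin k, (0 < (R i (p i)).re ∧ (R i (p i)).im = 0) ∧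
      ∀ j : Fin n, (j : ℕ) < (p i : ℕ) → R i j = 0

/-!
Existence is Gram–Schmidt on the columns of a factor `A = Bᴴ B`, by induction on the number of
columns. If the first column `c` of `B` vanishes, factor the remaining columns and prepend a
zero column. Otherwise, with `u = c / ‖c‖`, the row `r = uᴴ B` has first entry `‖c‖ > 0`, and
the projection `D = B - u r` of `B` onto `u^⊥` has first column zero and satisfies
`Bᴴ B = rᴴ r + Dᴴ D`; stack `r` on a factorization of `Dᴴ D`.

Uniqueness: in `A = Rᴴ R` the columns before the first pivot `p 0` vanish, `A (p 0) (p 0) ≠ 0`,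
and row `p 0` of `A` is `conj (R 0 (p 0)) • R 0`. So `A` determines `p 0`, then the positive
number `R 0 (p 0)`, then the first row, and the remaining rows factor `A - (R 0)ᴴ (R 0)`.
The rank of `R` is `k` because its pivot columns form an upper triangular submatrix with
nonzero diagonal.
-/

namespace Matrix

variable {α : Type*} {m : Type*} {k n : ℕ}

def consZeroCol [Zero α] (X : Matrix m (Fin n) α) : Matrix m (Fin (n + 1)) α :=
  of fun i => Fin.cons 0 (X i)

@[simp]
lemma consZeroCol_apply_zero [Zero α] (X : Matrix m (Fin n) α) (i : m) :
    consZeroCol X i 0 = 0 := rfl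

@[simp]
lemma consZeroCol_apply_succ [Zero α] (X : Matrix m (Fin n) α) (i : m) (j : Fin n) :
    consZeroCol X i j.succ = X i j := rfl

lemma eq_consZeroCol_of_apply_zero [Zero α] {C : Matrix m (Fin (n + 1)) α}
    (hC : ∀ i, C i 0 = 0) : C = consZeroCol (C.submatrix id Fin.succ) := by
  ext i j
  induction j using Fin.cases <;> simp [hC]

section Semiring

variable [Fintype m] [Semiring α] [StarRing α]

lemma conjTranspose_mul_self_consZeroCol_congr {m' : Type*} [Fintype m']
    {X : Matrix m (Fin n) α} {Y : Matrix m' (Fin n) α} (h : Xᴴ * X = Yᴴ * Y) :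
    (consZeroCol X)ᴴ * consZeroCol X = (consZeroCol Y)ᴴ * consZeroCol Y := by
  ext i j
  induction i using Fin.cases <;> induction j using Fin.cases <;> simp [mul_apply]
  simpa [mul_apply] using congrFun₂ h _ _

lemma conjTranspose_mul_self_eq_vecMulVec_add {o : Type*} (M : Matrix (Fin (k + 1)) o α) :
    Mᴴ * M =
      vecMulVec (star (M 0)) (M 0) + (M.submatrix Fin.succ id)ᴴ * M.submatrix Fin.succ id := by
  ext i j
  simp [mul_apply, Fin.sum_univ_succ, vecMulVec_apply]

end Semiring

variable {l o : Type*} [Fintype m] [Fintype l] [DecidableEq l] [Ring α] [StarRing α]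

lemma conjTranspose_mul_self_eq_add_of_conjTranspose_mul_self_eq_one (C : Matrix m o α)
    {U : Matrix m l α} (hU : Uᴴ * U = 1) :
    Cᴴ * C = (Uᴴ * C)ᴴ * (Uᴴ * C) + (C - U * (Uᴴ * C))ᴴ * (C - U * (Uᴴ * C)) := by
  set B := Uᴴ * C
  have hCP : Cᴴ * (U * B) = Bᴴ * B := by
    rw [← Matrix.mul_assoc, conjTranspose_mul, conjTranspose_conjTranspose]
  have hPC : (U * B)ᴴ * C = Bᴴ * B := by
    rw [conjTranspose_mul, Matrix.mul_assoc]
  have hPP : (U * B)ᴴ * (U * B) = Bᴴ * B := by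
    rw [conjTranspose_mul, Matrix.mul_assoc, ← Matrix.mul_assoc Uᴴ, hU, Matrix.one_mul]
  rw [conjTranspose_sub, Matrix.sub_mul, Matrix.mul_sub, Matrix.mul_sub, hCP, hPC, hPP]
  abel

lemma conjTranspose_mul_self_eq_vecMulVec_add_of_dotProduct_star_self_eq_one (C : Matrix m o α)
    {u : m → α} (hu : star u ⬝ᵥ u = 1) :
    Cᴴ * C = vecMulVec (star (star u ᵥ* C)) (star u ᵥ* C)
      + (C - vecMulVec u (star u ᵥ* C))ᴴ * (C - vecMulVec u (star u ᵥ* C)) := by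
  have hU : (replicateCol Unit u)ᴴ * replicateCol Unit u = 1 := by
    ext; simpa [mul_apply, dotProduct] using hu
  have hr : replicateRow Unit (star u ᵥ* C) = (replicateCol Unit u)ᴴ * C := by
    rw [replicateRow_vecMul, conjTranspose_replicateCol]
  rw [vecMulVec_eq Unit, vecMulVec_eq Unit, ← conjTranspose_replicateRow, hr]
  exact conjTranspose_mul_self_eq_add_of_conjTranspose_mul_self_eq_one C hU

end Matrix

lemma exists_eq_smul_dotProduct_star_self_eq_one {m : Type*} [Fintype m] {c : m → ℂ}
    (hc : c ≠ 0) : ∃ s : ℝ, 0 < s ∧ ∃ u : m → ℂ, star u ⬝ᵥ u = 1 ∧ c = (s : ℂ) • u := by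
  obtain ⟨s, hs, hcc⟩ : ∃ s : ℝ, 0 < s ∧ star c ⬝ᵥ c = (s : ℂ) ^ 2 := by
    obtain ⟨ht, him⟩ := Complex.pos_iff.mp (dotProduct_star_self_pos_iff.mpr hc)
    refine ⟨_, Real.sqrt_pos.mpr ht, ?_⟩
    rw [← Complex.ofReal_pow, Real.sq_sqrt ht.le]
    exact Complex.ext rfl him.symm
  have hs' : (s : ℂ) ≠ 0 := Complex.ofReal_ne_zero.mpr hs.ne'
  refine ⟨s, hs, (s : ℂ)⁻¹ • c, ?_, by rw [smul_inv_smul₀ hs']⟩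
  rw [star_smul, smul_dotProduct, dotProduct_smul, hcc]
  simp only [star_inv₀, RCLike.star_def, Complex.conj_ofReal, smul_eq_mul]
  field_simp

variable {k n : ℕ}

def IsPosPivotMap (R : Matrix (Fin k) (Fin n) ℂ) (p : Fin k → Fin n) : Prop :=
  StrictMono p ∧ ∀ i, (0 < (R i (p i)).re ∧ (R i (p i)).im = 0) ∧ ∀ j, j < p i → R i j = 0

lemma rowEchelonPosPivots_iff {R : Matrix (Fin k) (Fin n) ℂ} :
    RowEchelonPosPivots R ↔ ∃ p, IsPosPivotMap R p := Iff.rfl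

namespace IsPosPivotMap

variable {R : Matrix (Fin k) (Fin n) ℂ} {p : Fin k → Fin n}

lemma pivot_ne_zero (h : IsPosPivotMap R p) (i : Fin k) : R i (p i) ≠ 0 := by
  intro h0
  simpa [h0] using (h.2 i).1.1

lemma apply_eq_zero_of_lt (h : IsPosPivotMap R p) {i : Fin k} {j : Fin n} (hj : j < p i) :
    R i j = 0 :=
  (h.2 i).2 j hj

lemma apply_pivot_eq_zero_of_lt (h : IsPosPivotMap R p) {i l : Fin k} (hil : i < l) :
    R l (p i) = 0 :=
  h.apply_eq_zero_of_lt (h.1 hil)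

lemma rank_eq (h : IsPosPivotMap R p) : R.rank = k := by
  have hT : (R.submatrix id p).IsUpperTriangular := fun i j hji =>
    h.apply_pivot_eq_zero_of_lt hji
  have hsub : (R.submatrix id p).rank = k := by
    simpa using rank_mul_eq_right_of_isUpperTriangular _ (1 : Matrix (Fin k) (Fin k) ℂ) hT
      (fun i => h.pivot_ne_zero i)
  exact le_antisymm (rank_le_height R) (hsub.symm.le.trans (rank_submatrix_le R id p))

section

variable {R : Matrix (Fin (k + 1)) (Fin n) ℂ} {p : Fin (k + 1) → Fin n}

lemma submatrix_succ (h : IsPosPivotMap R p) :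
    IsPosPivotMap (R.submatrix Fin.succ id) (p ∘ Fin.succ) :=
  ⟨h.1.comp (Fin.strictMono_succ), fun i => h.2 i.succ⟩

lemma apply_eq_zero_of_lt_pivot_zero (h : IsPosPivotMap R p) (l : Fin (k + 1)) {j : Fin n}
    (hj : j < p 0) : R l j = 0 :=
  h.apply_eq_zero_of_lt (hj.trans_le (h.1.monotone (Fin.zero_le l)))

lemma conjTranspose_mul_self_apply_eq_zero_of_lt (h : IsPosPivotMap R p) {j : Fin n}
    (hj : j < p 0) (j' : Fin n) : (Rᴴ * R) j j' = 0 := by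
  simp [mul_apply, h.apply_eq_zero_of_lt_pivot_zero _ hj]

lemma conjTranspose_mul_self_pivot_zero_apply (h : IsPosPivotMap R p) (j : Fin n) :
    (Rᴴ * R) (p 0) j = star (R 0 (p 0)) * R 0 j := by
  simp [mul_apply, Fin.sum_univ_succ, h.apply_pivot_eq_zero_of_lt (Fin.succ_pos _)]

lemma conjTranspose_mul_self_pivot_zero_ne_zero (h : IsPosPivotMap R p) :
    (Rᴴ * R) (p 0) (p 0) ≠ 0 := by
  rw [h.conjTranspose_mul_self_pivot_zero_apply]
  exact mul_ne_zero (star_ne_zero.mpr (h.pivot_ne_zero 0)) (h.pivot_ne_zero 0)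

end

end IsPosPivotMap

lemma Complex.eq_of_star_mul_self_eq {x y : ℂ} (hx : 0 < x.re ∧ x.im = 0)
    (hy : 0 < y.re ∧ y.im = 0) (h : star x * x = star y * y) : x = y := by
  have hre : x.re ^ 2 = y.re ^ 2 := by
    simpa [Complex.ext_iff, hx.2, hy.2, sq] using h
  exact Complex.ext ((pow_left_inj₀ hx.1.le hy.1.le two_ne_zero).mp hre) (hx.2.trans hy.2.symm)

namespace RowEchelonPosPivots

lemma submatrix_succ {R : Matrix (Fin (k + 1)) (Fin n) ℂ} (hR : RowEchelonPosPivots R) :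
    RowEchelonPosPivots (R.submatrix Fin.succ id) := by
  obtain ⟨p, hp⟩ := rowEchelonPosPivots_iff.mp hR
  exact ⟨_, hp.submatrix_succ⟩

lemma consZeroCol {X : Matrix (Fin k) (Fin n) ℂ} (hX : RowEchelonPosPivots X) :
    RowEchelonPosPivots X.consZeroCol := by
  obtain ⟨p, hp, hpiv⟩ := hX
  refine ⟨Fin.succ ∘ p, Fin.strictMono_succ.comp hp, fun i => ⟨(hpiv i).1, fun j hj => ?_⟩⟩
  induction j using Fin.cases with
  | zero => rfl
  | succ j => exact (hpiv i).2 j (by simpa using hj)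

lemma cons {r : Fin (n + 1) → ℂ} (hr : 0 < (r 0).re ∧ (r 0).im = 0)
    {S : Matrix (Fin k) (Fin (n + 1)) ℂ} (hS : RowEchelonPosPivots S) (hS0 : ∀ i, S i 0 = 0) :
    RowEchelonPosPivots (of (Fin.cons r S) : Matrix (Fin (k + 1)) (Fin (n + 1)) ℂ) := by
  obtain ⟨q, hq⟩ := rowEchelonPosPivots_iff.mp hS
  have hq0 : ∀ i, 0 < q i := fun i =>
    Fin.pos_iff_ne_zero.mpr fun h0 => hq.pivot_ne_zero i (h0 ▸ hS0 i)
  refine ⟨Fin.cons 0 q, Fin.strictMono_cons.mpr ⟨hq0, hq.1⟩, fun i => ?_⟩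
  induction i using Fin.cases with
  | zero => exact ⟨hr, fun j hj => absurd hj (Nat.not_lt_zero _)⟩
  | succ i => exact hq.2 i

lemma rank_eq {R : Matrix (Fin k) (Fin n) ℂ} (hR : RowEchelonPosPivots R) : R.rank = k := by
  obtain ⟨p, hp⟩ := rowEchelonPosPivots_iff.mp hR
  exact hp.rank_eq

lemma row_zero_eq_of_conjTranspose_mul_self_eq {R S : Matrix (Fin (k + 1)) (Fin n) ℂ}
    (hR : RowEchelonPosPivots R) (hS : RowEchelonPosPivots S) (h : Rᴴ * R = Sᴴ * S) :
    R 0 = S 0 := by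
  obtain ⟨p, hp⟩ := rowEchelonPosPivots_iff.mp hR
  obtain ⟨q, hq⟩ := rowEchelonPosPivots_iff.mp hS
  have hpq : p 0 = q 0 := by
    rcases lt_trichotomy (p 0) (q 0) with hlt | heq | hlt
    · refine absurd ?_ hp.conjTranspose_mul_self_pivot_zero_ne_zero
      rw [h]
      exact hq.conjTranspose_mul_self_apply_eq_zero_of_lt hlt (p 0)
    · exact heq
    · refine absurd ?_ hq.conjTranspose_mul_self_pivot_zero_ne_zero
      rw [← h]
      exact hp.conjTranspose_mul_self_apply_eq_zero_of_lt hlt (q 0)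
  have hrow : ∀ j, star (R 0 (p 0)) * R 0 j = star (S 0 (p 0)) * S 0 j := fun j => by
    rw [← hp.conjTranspose_mul_self_pivot_zero_apply, h, hpq,
      hq.conjTranspose_mul_self_pivot_zero_apply]
  have hpiv : R 0 (p 0) = S 0 (p 0) :=
    Complex.eq_of_star_mul_self_eq (hp.2 0).1 (hpq ▸ (hq.2 0).1) (hrow (p 0))
  funext j
  exact mul_left_cancel₀ (star_ne_zero.mpr (hp.pivot_ne_zero 0)) (hpiv ▸ hrow j)

theorem eq_of_conjTranspose_mul_self_eq : ∀ {k : ℕ} {R S : Matrix (Fin k) (Fin n) ℂ},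
    RowEchelonPosPivots R → RowEchelonPosPivots S → Rᴴ * R = Sᴴ * S → R = S
  | 0, _, _, _, _, _ => by ext i; exact i.elim0
  | k + 1, R, S, hR, hS, h => by
    have h0 := row_zero_eq_of_conjTranspose_mul_self_eq hR hS h
    have htail : R.submatrix Fin.succ id = S.submatrix Fin.succ id := by
      refine eq_of_conjTranspose_mul_self_eq hR.submatrix_succ hS.submatrix_succ ?_
      rw [conjTranspose_mul_self_eq_vecMulVec_add, conjTranspose_mul_self_eq_vecMulVec_add S,
        h0] at h
      exact add_left_cancel h
    funext i
    induction i using Fin.cases with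
    | zero => exact h0
    | succ i => exact congrFun htail i

theorem exists_conjTranspose_mul_self_eq {m : Type*} [Fintype m] :
    ∀ {n : ℕ} (C : Matrix m (Fin n) ℂ),
      ∃ k, ∃ R : Matrix (Fin k) (Fin n) ℂ, RowEchelonPosPivots R ∧ Cᴴ * C = Rᴴ * R
  | 0, C => ⟨0, 0, ⟨isEmptyElim, fun a => isEmptyElim a, isEmptyElim⟩, by ext i; exact i.elim0⟩
  | n + 1, C => by
    by_cases hc : ∀ i, C i 0 = 0
    · obtain ⟨k, R, hR, hCR⟩ := exists_conjTranspose_mul_self_eq (C.submatrix id Fin.succ)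
      refine ⟨k, R.consZeroCol, hR.consZeroCol, ?_⟩
      rw [eq_consZeroCol_of_apply_zero hc]
      exact conjTranspose_mul_self_consZeroCol_congr hCR
    · obtain ⟨s, hs, u, hu, hcu⟩ :=
        exists_eq_smul_dotProduct_star_self_eq_one (c := fun i => C i 0) fun h0 =>
          hc fun i => congrFun h0 i
      set r := star u ᵥ* C
      set D := C - vecMulVec u r
      have hr0 : r 0 = s := by
        change star u ⬝ᵥ (fun i => C i 0) = s
        rw [hcu, dotProduct_smul, hu, smul_eq_mul, mul_one]
      have hD0 (i : m) : D i 0 = 0 := by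
        have hci : C i 0 = s * u i := congrFun hcu i
        simp only [D, Matrix.sub_apply, vecMulVec_apply, hr0, hci, mul_comm, sub_self]
      obtain ⟨k, R, hR, hDR⟩ := exists_conjTranspose_mul_self_eq (D.submatrix id Fin.succ)
      refine ⟨k + 1, of (Fin.cons r R.consZeroCol),
        hR.consZeroCol.cons (by simp [hr0, hs]) fun _ => rfl, ?_⟩
      calc Cᴴ * C = vecMulVec (star r) r + Dᴴ * D :=
            conjTranspose_mul_self_eq_vecMulVec_add_of_dotProduct_star_self_eq_one C hu
        _ = vecMulVec (star r) r + (R.consZeroCol)ᴴ * R.consZeroCol := by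
            rw [eq_consZeroCol_of_apply_zero hD0, conjTranspose_mul_self_consZeroCol_congr hDR]
        _ = (of (Fin.cons r R.consZeroCol))ᴴ * of (Fin.cons r R.consZeroCol) := by
            rw [conjTranspose_mul_self_eq_vecMulVec_add]
            rfl

end RowEchelonPosPivots

/-- Every Hermitian positive semidefinite matrix `A ∈ ℂ^{n×n}` of rank
`k` has a unique factorization `A = R^* R` with `R ∈ ℂ^{k×n}` in row echelon form with
positive pivots. -/
theorem posSemidef_row_echelon_factorization
    (n k : ℕ) (A : Matrix (Fin n) (Fin n) ℂ)
    (hA : A.PosSemidef) (hrank : A.rank = k) :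
    ∃! R : Matrix (Fin k) (Fin n) ℂ, RowEchelonPosPivots R ∧ A = Rᴴ * R := by
  obtain ⟨B, rfl⟩ : ∃ B : Matrix (Fin n) (Fin n) ℂ, A = Bᴴ * B := by
    open scoped MatrixOrder in
    exact CStarAlgebra.nonneg_iff_eq_star_mul_self.mp hA.nonneg
  obtain ⟨k', R, hR, hBR⟩ := RowEchelonPosPivots.exists_conjTranspose_mul_self_eq B
  obtain rfl : k' = k := by
    rw [← hrank, hBR, rank_conjTranspose_mul_self, hR.rank_eq]
  refine ⟨R, ⟨hR, hBR⟩, fun S ⟨hS, hBS⟩ => ?_⟩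
  exact hS.eq_of_conjTranspose_mul_self_eq hR (hBS ▸ hBR)

end
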